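/- arXiv:1506.08559 — 5 statements merged into one kernel-verified Lean document; each statement's English description precedes it below -/
import Mathlib

section
/- Every polyhedral real Banach space contains no isometric copy of c; that is, if X is polyhedral then there is no linear isometric embedding of c into X. -/
open Filter Topology Metric
open scoped ENNReal

noncomputable section

/-- The space `ℓ₁` of absolutely summable real sequences. -/
abbrev EllOne : Type := lp (fun _ : ℕ => ℝ) 1

/-- The subspace of `ℓ∞` consisting of convergent real sequences. -/
def convSeq : Subspace ℝ (lp (fun _ : ℕ => ℝ) ∞) where
  carrier := {f | ∃ l : ℝ, Tendsto (fun n => f n) atTop (𝓝 l)}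
  add_mem' := by
    rintro f g ⟨a, ha⟩ ⟨b, hb⟩
    exact ⟨a + b, by simpa [lp.coeFn_add] using ha.add hb⟩
  zero_mem' := ⟨0, by simp [lp.coeFn_zero]⟩
  smul_mem' := by
    rintro c f ⟨a, ha⟩
    exact ⟨c * a, by simpa [lp.coeFn_smul] using ha.const_mul c⟩

/-- The Banach space `c` of convergent real sequences with the sup norm,
realized as a subspace of `ℓ∞`. -/
abbrev SpaceC : Type := ↥convSeq

/-- A normed space is polyhedral if the unit ball of each of its
finite-dimensional subspaces is a polytope (the convex hull of finitely many points). -/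
def IsPolyhedralSpace (X : Type*) [NormedAddCommGroup X] [NormedSpace ℝ X] : Prop :=
  ∀ Y : Subspace ℝ X, FiniteDimensional ℝ Y →
    ∃ F : Set Y, F.Finite ∧ closedBall (0 : Y) 1 = convexHull ℝ F

/-- The set of extreme points of the closed unit ball of the dual of `X`. -/
def extBdual (X : Type*) [NormedAddCommGroup X] [NormedSpace ℝ X] :
    Set (StrongDual ℝ X) :=
  Set.extremePoints ℝ (closedBall (0 : StrongDual ℝ X) 1)

/-- `D(x) = {x* ∈ S_{X*} : x*(x) = 1}`. -/
def Dface {X : Type*} [NormedAddCommGroup X] [NormedSpace ℝ X] (x : X) :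
    Set (StrongDual ℝ X) :=
  {f | ‖f‖ = 1 ∧ f x = 1}

/-!
Sample the unit circle at the angles `θₙ = 1/(n+1)`: the sequences `(cos θₙ)` and `(sin θₙ)`
converge, so they span a two-dimensional subspace `Y` of `c`. For each `m`, the point
`cos θₘ • (cos θₙ)ₙ + sin θₘ • (sin θₙ)ₙ` of the unit ball of `Y` has `m`-th coordinate `1`; if
the ball were the convex hull of a finite set `F`, the `m`-th coordinate would reach `1` at a
point of `F`. But a point `a • cos + b • sin` of `Y` has coordinate `1` only where the line
`a x + b y = 1` meets the unit circle, i.e. at no more than two indices, so finitely many points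
of `F` cannot serve all `m`. Finally, polyhedrality passes to isometrically embedded subspaces.
-/

theorem IsPolyhedralSpace.of_linearIsometry {E X : Type*} [NormedAddCommGroup E]
    [NormedSpace ℝ E] [NormedAddCommGroup X] [NormedSpace ℝ X] (T : E →ₗᵢ[ℝ] X)
    (hX : IsPolyhedralSpace X) : IsPolyhedralSpace E := by
  intro Y _
  let e : Y ≃ₗᵢ[ℝ] Y.map T.toLinearMap :=
    { Submodule.equivMapOfInjective T.toLinearMap T.injective Y with
      norm_map' := fun y => T.norm_map y }
  obtain ⟨F, hF, hball⟩ := hX (Y.map T.toLinearMap) inferInstance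
  refine ⟨e.symm '' F, hF.image _, ?_⟩
  calc closedBall 0 1 = e.symm '' closedBall 0 1 := by rw [e.symm.image_closedBall, map_zero]
    _ = e.symm '' convexHull ℝ F := by rw [hball]
    _ = convexHull ℝ (e.symm '' F) := e.symm.toLinearEquiv.toLinearMap.image_convexHull F

theorem exists_mem_apply_eq_one_of_closedBall_eq_convexHull {E : Type*}
    [NormedAddCommGroup E] [NormedSpace ℝ E] {Y : Subspace ℝ E} {F : Set Y}
    (hF : closedBall (0 : Y) 1 = convexHull ℝ F) (φ : E →ₗ[ℝ] ℝ) (hφ : ∀ z, φ z ≤ ‖z‖)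
    {x : Y} (hx : ‖x‖ ≤ 1) (hφx : φ x = 1) : ∃ y ∈ F, φ y = 1 := by
  have hxF : x ∈ convexHull ℝ F := hF ▸ mem_closedBall_zero_iff.mpr hx
  obtain ⟨y, hyF, hxy⟩ := (φ.comp Y.subtype).convexOn convex_univ |>.exists_ge_of_mem_convexHull
    (Set.subset_univ F) hxF
  have hy : ‖y‖ ≤ 1 := mem_closedBall_zero_iff.mp (hF ▸ subset_convexHull ℝ F hyF)
  exact ⟨y, hyF, le_antisymm ((hφ y).trans hy) (hφx ▸ hxy)⟩

theorem eq_of_mem_line_of_mem_unitCircle {a b c₁ c₂ c₃ s₁ s₂ s₃ : ℝ}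
    (e₁ : a * c₁ + b * s₁ = 1) (e₂ : a * c₂ + b * s₂ = 1) (e₃ : a * c₃ + b * s₃ = 1)
    (p₁ : c₁ ^ 2 + s₁ ^ 2 = 1) (p₂ : c₂ ^ 2 + s₂ ^ 2 = 1) (p₃ : c₃ ^ 2 + s₃ ^ 2 = 1)
    (h₁₂ : c₁ ≠ c₂) (h₂₃ : c₂ ≠ c₃) : c₁ = c₃ := by
  have root : ∀ c s : ℝ, a * c + b * s = 1 → c ^ 2 + s ^ 2 = 1 →
      (a ^ 2 + b ^ 2) * c ^ 2 - 2 * a * c + (1 - b ^ 2) = 0 := by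
    intro c s e p
    have hbs : b * s = 1 - a * c := by linarith
    linear_combination b ^ 2 * p - (b * s + 1 - a * c) * hbs
  have vieta : ∀ {c c' s s'}, c ≠ c' → a * c + b * s = 1 → c ^ 2 + s ^ 2 = 1 →
      a * c' + b * s' = 1 → c' ^ 2 + s' ^ 2 = 1 → (a ^ 2 + b ^ 2) * (c + c') = 2 * a := by
    intro c c' s s' hne e p e' p'
    have h : (c - c') * ((a ^ 2 + b ^ 2) * (c + c') - 2 * a) = 0 := by
      linear_combination root c s e p - root c' s' e' p'
    linear_combination (mul_eq_zero.mp h).resolve_left (sub_ne_zero.mpr hne)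
  have hab : a ^ 2 + b ^ 2 ≠ 0 := by
    intro h
    have ha : a = 0 := by nlinarith
    have hb : b = 0 := by nlinarith
    simp [ha, hb] at e₁
  have h := (vieta h₁₂ e₁ p₁ e₂ p₂).trans (vieta h₂₃ e₂ p₂ e₃ p₃).symm
  have := mul_left_cancel₀ hab h
  linarith

namespace SpaceC

def ofTendsto (u : ℕ → ℝ) {l : ℝ} (hu : Tendsto u atTop (𝓝 l)) : SpaceC :=
  ⟨⟨u, memℓp_infty hu.norm.bddAbove_range⟩, l, hu⟩

def evalₗ (n : ℕ) : SpaceC →ₗ[ℝ] ℝ :=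
  (lp.evalₗ (𝕜 := ℝ) (fun _ : ℕ => ℝ) ∞ n).comp convSeq.subtype

theorem evalₗ_le_norm (n : ℕ) (x : SpaceC) : evalₗ n x ≤ ‖x‖ :=
  (le_abs_self _).trans (lp.norm_apply_le_norm ENNReal.top_ne_zero (x : lp (fun _ : ℕ => ℝ) ∞) n)

def sampleAngle (n : ℕ) : ℝ := 1 / (n + 1)

theorem tendsto_sampleAngle : Tendsto sampleAngle atTop (𝓝 0) :=
  tendsto_one_div_add_atTop_nhds_zero_nat

theorem cos_sampleAngle_injective : Function.Injective fun n => Real.cos (sampleAngle n) := by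
  have mem : ∀ n, sampleAngle n ∈ Set.Icc 0 Real.pi := fun n =>
    ⟨by unfold sampleAngle; positivity,
      (div_le_one_of_le₀ (by simp) (by positivity)).trans (by linarith [Real.pi_gt_three])⟩
  intro m n h
  have := Real.injOn_cos (mem m) (mem n) h
  unfold sampleAngle at this
  simpa using this

def cosSeq : SpaceC :=
  ofTendsto _ ((Real.continuous_cos.tendsto 0).comp tendsto_sampleAngle)

def sinSeq : SpaceC :=
  ofTendsto _ ((Real.continuous_sin.tendsto 0).comp tendsto_sampleAngle)

theorem smul_cosSeq_add_smul_sinSeq_apply (a b : ℝ) (n : ℕ) :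
    ((a • cosSeq + b • sinSeq : SpaceC) : lp (fun _ : ℕ => ℝ) ∞) n =
      a * Real.cos (sampleAngle n) + b * Real.sin (sampleAngle n) :=
  rfl

def circleSpan : Subspace ℝ SpaceC := Submodule.span ℝ {cosSeq, sinSeq}

theorem finite_setOf_apply_eq_one {y : SpaceC} (hy : y ∈ circleSpan) :
    {n | (y : lp (fun _ : ℕ => ℝ) ∞) n = 1}.Finite := by
  obtain ⟨a, b, rfl⟩ := Submodule.mem_span_pair.mp hy
  simp only [smul_cosSeq_add_smul_sinSeq_apply]
  by_contra hinf
  obtain ⟨n₁, h₁, -⟩ := Set.Infinite.exists_gt hinf 0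
  obtain ⟨n₂, h₂, h₁₂⟩ := Set.Infinite.exists_gt hinf n₁
  obtain ⟨n₃, h₃, h₂₃⟩ := Set.Infinite.exists_gt hinf n₂
  have := eq_of_mem_line_of_mem_unitCircle h₁ h₂ h₃ (Real.cos_sq_add_sin_sq _)
    (Real.cos_sq_add_sin_sq _) (Real.cos_sq_add_sin_sq _)
    (cos_sampleAngle_injective.ne h₁₂.ne) (cos_sampleAngle_injective.ne h₂₃.ne)
  exact (h₁₂.trans h₂₃).ne (cos_sampleAngle_injective this)

theorem exists_mem_circleSpan_norm_le_one_apply_eq_one (m : ℕ) :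
    ∃ x ∈ circleSpan, ‖x‖ ≤ 1 ∧ (x : lp (fun _ : ℕ => ℝ) ∞) m = 1 := by
  refine ⟨Real.cos (sampleAngle m) • cosSeq + Real.sin (sampleAngle m) • sinSeq,
    Submodule.mem_span_pair.mpr ⟨_, _, rfl⟩, ?_, ?_⟩
  · rw [Submodule.coe_norm]
    refine lp.norm_le_of_forall_le zero_le_one fun n => ?_
    rw [smul_cosSeq_add_smul_sinSeq_apply, ← Real.cos_sub, Real.norm_eq_abs]
    exact Real.abs_cos_le_one _
  · rw [smul_cosSeq_add_smul_sinSeq_apply, ← Real.cos_sub, sub_self, Real.cos_zero]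

theorem not_isPolyhedralSpace : ¬ IsPolyhedralSpace SpaceC := by
  intro h
  obtain ⟨F, hF, hball⟩ := h circleSpan (FiniteDimensional.span_of_finite ℝ (by simp))
  have hcover : Set.univ ⊆ ⋃ y ∈ F, {n | ((y : SpaceC) : lp (fun _ : ℕ => ℝ) ∞) n = 1} := by
    intro m _
    obtain ⟨x, hxY, hx, hxm⟩ := exists_mem_circleSpan_norm_le_one_apply_eq_one m
    obtain ⟨y, hyF, hy⟩ := exists_mem_apply_eq_one_of_closedBall_eq_convexHull hball
      (evalₗ m) (evalₗ_le_norm m) (x := ⟨x, hxY⟩) hx hxm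
    exact Set.mem_biUnion hyF hy
  exact Set.infinite_univ ((hF.biUnion fun y _ => finite_setOf_apply_eq_one y.2).subset hcover)

end SpaceC

theorem no_isometric_c_of_polyhedral_general
    {X : Type} [NormedAddCommGroup X] [NormedSpace ℝ X]
    (hpoly : IsPolyhedralSpace X) :
    ¬ Nonempty (SpaceC →ₗᵢ[ℝ] X) :=
  fun ⟨T⟩ => SpaceC.not_isPolyhedralSpace (hpoly.of_linearIsometry T)

/-- A polyhedral real Banach space contains no isometric copy of `c`. -/
theorem no_isometric_c_of_polyhedral
    {X : Type} [NormedAddCommGroup X] [NormedSpace ℝ X] [CompleteSpace X]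
    (hpoly : IsPolyhedralSpace X) :
    ¬ Nonempty (SpaceC →ₗᵢ[ℝ] X) :=
  no_isometric_c_of_polyhedral_general hpoly

end
end

section
/- Let X be a real Banach space satisfying property (BD): for each x in the unit sphere S_X, sup{x*(x) : x* ∈ ext(B_{X*}) \ D(x)} < 1. Then X is a polyhedral space. -/
open Filter Topology Metric
open scoped ENNReal

noncomputable section

/-!
(BD) passes to every subspace `Y`: an extreme point of the dual ball of `Y` extends, by
Hahn–Banach and Krein–Milman in the weak* topology, to an extreme point of the dual ball of `X`.
For finite-dimensional `Y` it then suffices that `ext B_{Y*}` is finite, because an extreme point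
of `B_Y` is determined by the extreme functionals equal to `1` at it, and `B_Y` is the convex hull
of its extreme points.

If `ext B_{Y*}` were infinite, it would accumulate at some `κ`; pick `v` with `κ ∈ D(v)` and
`D(v)` of least dimension. By (BD) the extreme functionals near `κ` lie in `D(v)`, so `κ` is on
the relative boundary of `D(v)` and some `z ∈ Y` exposes a proper face of `D(v)` through `κ`.
(BD) also makes the norm affine on a segment `[v, v + t • z]`, which identifies that face with
`D(2 • v + t • z)`, contradicting minimality.
-/

open Set

section ConvexGeometry

variable {E : Type*} [NormedAddCommGroup E] [NormedSpace ℝ E]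

lemma eq_of_mem_extremePoints_of_two_smul_sub_mem {s : Set E} {e x : E}
    (he : e ∈ extremePoints ℝ s) (hx : x ∈ s) (h : (2 : ℝ) • e - x ∈ s) : e = x :=
  ((mem_extremePoints.1 he).2 x hx _ h
    ⟨1 / 2, 1 / 2, by norm_num, by norm_num, by norm_num, by module⟩).1.symm

lemma Convex.exists_le_of_notMem_interior {A : Set E} {x : E} (hA : Convex ℝ A)
    (hint : (interior A).Nonempty) (hx : x ∉ interior A) :
    ∃ f : StrongDual ℝ E, (∀ a ∈ A, f a ≤ f x) ∧ ∃ a ∈ A, f a < f x := by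
  obtain ⟨f, hf⟩ := geometric_hahn_banach_open_point hA.interior isOpen_interior hx
  obtain ⟨a₀, ha₀⟩ := hint
  refine ⟨f, fun a ha => ?_, a₀, interior_subset ha₀, hf a₀ ha₀⟩
  have : a ∈ closure (interior A) := by
    rw [hA.closure_interior_eq_closure_of_nonempty_interior ⟨a₀, ha₀⟩]
    exact subset_closure ha
  exact closure_minimal (fun y hy => (hf y hy).le) (isClosed_le f.continuous continuous_const) this

lemma Convex.interior_nonempty_in_vectorSpan [FiniteDimensional ℝ E] {Γ : Set E} {κ : E}
    (hΓ : Convex ℝ Γ) (hκ : κ ∈ Γ) :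
    (interior {w : vectorSpan ℝ Γ | (w : E) + κ ∈ Γ}).Nonempty := by
  set W := vectorSpan ℝ Γ
  set T : Set W := {w | (w : E) + κ ∈ Γ}
  have hT : Convex ℝ T := hΓ.affine_preimage (W.subtype.toAffineMap + AffineMap.const ℝ W κ)
  have h0T : (0 : W) ∈ T := by simpa [T] using hκ
  rw [hT.interior_nonempty_iff_affineSpan_eq_top,
    AffineSubspace.affineSpan_eq_top_iff_vectorSpan_eq_top_of_nonempty ℝ W W ⟨0, h0T⟩,
    vectorSpan_eq_span_vsub_set_right ℝ h0T]
  simp only [vsub_eq_sub, sub_zero, image_id']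
  apply Submodule.map_injective_of_injective W.injective_subtype
  rw [Submodule.map_span, Submodule.map_subtype_top]
  change _ = vectorSpan ℝ Γ
  rw [vectorSpan_eq_span_vsub_set_right ℝ hκ]
  congr 1
  ext e
  constructor
  · rintro ⟨w, hw, rfl⟩
    exact ⟨_, hw, by simp⟩
  · rintro ⟨γ, hγ, rfl⟩
    exact ⟨⟨γ - κ, vsub_mem_vectorSpan ℝ hγ hκ⟩, by simpa [T] using hγ, rfl⟩

/-- A limit of distinct extreme points of a convex set lies on its relative boundary, so some
functional attains its maximum over the set there without being constant on it. -/
lemma Convex.exists_le_of_accPt_extremePoints [FiniteDimensional ℝ E] {Γ : Set E} {κ : E}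
    (hΓ : Convex ℝ Γ) (hκ : κ ∈ Γ) (hacc : AccPt κ (𝓟 (extremePoints ℝ Γ))) :
    ∃ f : StrongDual ℝ E, (∀ γ ∈ Γ, f γ ≤ f κ) ∧ ∃ γ ∈ Γ, f γ < f κ := by
  set W := vectorSpan ℝ Γ
  have hW : ∀ {γ}, γ ∈ Γ → γ - κ ∈ W := fun hγ => vsub_mem_vectorSpan ℝ hγ hκ
  -- separate inside `W`, where `Γ - κ` has nonempty interior
  set T : Set W := {w | (w : E) + κ ∈ Γ}
  have hT : Convex ℝ T := hΓ.affine_preimage (W.subtype.toAffineMap + AffineMap.const ℝ W κ)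
  have h0 : (0 : W) ∉ interior T := by
    intro h
    obtain ⟨ε, hε, hball⟩ := Metric.mem_nhds_iff.1 (mem_interior_iff_mem_nhds.1 h)
    obtain ⟨e, ⟨hdist, he⟩, hne⟩ :=
      accPt_iff_nhds.1 hacc (ball κ (ε / 2)) (ball_mem_nhds _ (by positivity))
    have h2e : (2 : ℝ) • (⟨e - κ, hW (extremePoints_subset he)⟩ : W) ∈ T := by
      apply hball
      rw [mem_ball_zero_iff, norm_smul, Real.norm_two]
      have : ‖e - κ‖ < ε / 2 := by rwa [← dist_eq_norm]
      change 2 * ‖e - κ‖ < ε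
      linarith
    refine hne (eq_of_mem_extremePoints_of_two_smul_sub_mem he hκ ?_)
    rw [show (2 : ℝ) • e - κ = (2 : ℝ) • (e - κ) + κ by module]
    exact h2e
  obtain ⟨f, hf, w₀, hw₀, hlt⟩ :=
    hT.exists_le_of_notMem_interior (hΓ.interior_nonempty_in_vectorSpan hκ) h0
  obtain ⟨F, hFf, -⟩ := exists_extension_norm_eq W f
  have hF : ∀ γ (hγ : γ ∈ Γ), F γ = f ⟨γ - κ, hW hγ⟩ + F κ := fun γ hγ => by
    rw [← hFf]
    simp
  refine ⟨F, fun γ hγ => ?_, w₀ + κ, hw₀, ?_⟩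
  · have := hf ⟨γ - κ, hW hγ⟩ (by simpa [T] using hγ)
    rw [map_zero] at this
    linarith [hF γ hγ]
  · rw [map_zero] at hlt
    have := hFf w₀
    rw [map_add, this]
    linarith

end ConvexGeometry

lemma finrank_vectorSpan_lt_of_subset {K E : Type*} [Field K] [AddCommGroup E] [Module K E]
    [FiniteDimensional K E] {s t : Set E} (f : E →ₗ[K] K) (hst : s ⊆ t)
    (hs : ∀ a ∈ s, ∀ b ∈ s, f a = f b) {a b : E} (ha : a ∈ t) (hb : b ∈ t) (hab : f a ≠ f b) :
    Module.finrank K (vectorSpan K s) < Module.finrank K (vectorSpan K t) := by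
  refine Submodule.finrank_lt_finrank_of_lt (lt_of_le_of_ne (vectorSpan_mono K hst) fun h => hab ?_)
  have hker : vectorSpan K s ≤ LinearMap.ker f := by
    rw [vectorSpan_def, Submodule.span_le]
    rintro _ ⟨x, hx, y, hy, rfl⟩
    simp [hs x hx y hy]
  have := hker (h ▸ vsub_mem_vectorSpan K ha hb)
  simpa [sub_eq_zero] using this

lemma NormedSpace.inclusionInDoubleDual_surjective {V : Type*} [NormedAddCommGroup V]
    [NormedSpace ℝ V] [FiniteDimensional ℝ V] :
    Function.Surjective (NormedSpace.inclusionInDoubleDual ℝ V) := by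
  have hdim : Module.finrank ℝ V = Module.finrank ℝ (StrongDual ℝ (StrongDual ℝ V)) := by
    rw [← LinearMap.toContinuousLinearMap.finrank_eq, Subspace.dual_finrank_eq,
      ← LinearMap.toContinuousLinearMap.finrank_eq, Subspace.dual_finrank_eq]
  exact (LinearMap.injective_iff_surjective_of_finrank_eq_finrank hdim).1
    (NormedSpace.inclusionInDoubleDualLi ℝ).injective

section Dual

variable {V : Type*} [NormedAddCommGroup V] [NormedSpace ℝ V]

lemma apply_le_norm_of_norm_le_one {γ : StrongDual ℝ V} (hγ : ‖γ‖ ≤ 1) (v : V) : γ v ≤ ‖v‖ :=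
  (le_abs_self _).trans (by simpa using γ.le_of_opNorm_le hγ v)

lemma norm_le_one_of_mem_extBdual {g : StrongDual ℝ V} (hg : g ∈ extBdual V) : ‖g‖ ≤ 1 :=
  mem_closedBall_zero_iff.1 (extremePoints_subset hg)

/-- For `v ≠ 0` this is the paper's `D(v / ‖v‖)`; for `v = 0` it is the whole dual ball. -/
def normingSet (v : V) : Set (StrongDual ℝ V) :=
  closedBall 0 1 ∩ {γ | γ v = ‖v‖}

lemma mem_normingSet {v : V} {γ : StrongDual ℝ V} : γ ∈ normingSet v ↔ ‖γ‖ ≤ 1 ∧ γ v = ‖v‖ := by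
  simp [normingSet]

lemma convex_normingSet (v : V) : Convex ℝ (normingSet v) :=
  (convex_closedBall 0 1).inter
    ((convex_singleton ‖v‖).linear_preimage (NormedSpace.inclusionInDoubleDual ℝ V v).toLinearMap)

lemma isClosed_toStrongDual_preimage_normingSet (v : V) :
    IsClosed (WeakDual.toStrongDual ⁻¹' normingSet v : Set (WeakDual ℝ V)) :=
  (WeakDual.isClosed_closedBall 0 1).inter
    (isClosed_eq (WeakDual.eval_continuous v) continuous_const)

lemma isExtreme_normingSet (v : V) : IsExtreme ℝ (closedBall 0 1) (normingSet v) := by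
  refine ⟨inter_subset_left, ?_⟩
  rintro k₁ hk₁ k₂ hk₂ k hk ⟨a, b, ha, hb, hab, rfl⟩
  have h₁ := apply_le_norm_of_norm_le_one (mem_closedBall_zero_iff.1 hk₁) v
  have h₂ := apply_le_norm_of_norm_le_one (mem_closedBall_zero_iff.1 hk₂) v
  have hsum : a * k₁ v + b * k₂ v = a * ‖v‖ + b * ‖v‖ := by
    simpa [← add_mul, hab] using (mem_normingSet.1 hk).2
  refine ⟨hk₁, le_antisymm h₁ (not_lt.1 fun hlt => ?_)⟩
  nlinarith [mul_lt_mul_of_pos_left hlt ha, mul_le_mul_of_nonneg_left h₂ hb.le]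

lemma normingSet_add {v w : V} (h : ‖v + w‖ = ‖v‖ + ‖w‖) :
    normingSet (v + w) = normingSet v ∩ normingSet w := by
  ext γ
  simp only [mem_inter_iff, mem_normingSet, map_add, h]
  constructor
  · rintro ⟨hγ, hvw⟩
    have hv := apply_le_norm_of_norm_le_one hγ v
    have hw := apply_le_norm_of_norm_le_one hγ w
    exact ⟨⟨hγ, by linarith⟩, hγ, by linarith⟩
  · rintro ⟨⟨hγ, hv⟩, -, hw⟩
    exact ⟨hγ, by rw [hv, hw]⟩

lemma extBdual_inter_nonempty_of_isExtreme {M : Set (StrongDual ℝ V)} (hne : M.Nonempty)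
    (hcl : IsClosed (WeakDual.toStrongDual ⁻¹' M : Set (WeakDual ℝ V)))
    (hext : IsExtreme ℝ (closedBall 0 1) M) : (extBdual V ∩ M).Nonempty := by
  have : LocallyConvexSpace ℝ (WeakDual ℝ V) := WeakBilin.locallyConvexSpace
  have hM : IsCompact (WeakDual.toStrongDual ⁻¹' M : Set (WeakDual ℝ V)) :=
    (WeakDual.isCompact_closedBall 0 1).of_isClosed_subset hcl (preimage_mono hext.1)
  obtain ⟨e, he⟩ := hM.extremePoints_nonempty (hne.preimage WeakDual.toStrongDual.surjective)
  have he' : WeakDual.toStrongDual e ∈ extremePoints ℝ M := by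
    rw [← image_preimage_eq M WeakDual.toStrongDual.surjective, ← image_extremePoints]
    exact mem_image_of_mem _ he
  exact ⟨_, hext.extremePoints_subset_extremePoints he', extremePoints_subset he'⟩

lemma exists_mem_extBdual_apply_eq_norm (v : V) : ∃ e ∈ extBdual V, e v = ‖v‖ := by
  obtain ⟨g, hg, hgv⟩ := exists_dual_vector'' ℝ v
  obtain ⟨e, he, he'⟩ := extBdual_inter_nonempty_of_isExtreme ⟨g, mem_normingSet.2 ⟨hg, hgv⟩⟩
    (isClosed_toStrongDual_preimage_normingSet v) (isExtreme_normingSet v)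
  exact ⟨e, he, (mem_normingSet.1 he').2⟩

lemma exists_extension_mem_extBdual (Y : Subspace ℝ V) {g : StrongDual ℝ Y}
    (hg : g ∈ extBdual Y) : ∃ e ∈ extBdual V, ∀ y : Y, e y = g y := by
  set M : Set (StrongDual ℝ V) := closedBall 0 1 ∩ ⋂ y : Y, {k | k y = g y}
  have hres : ∀ k ∈ closedBall (0 : StrongDual ℝ V) 1,
      k.comp Y.subtypeL ∈ closedBall (0 : StrongDual ℝ Y) 1 := fun k hk =>
    mem_closedBall_zero_iff.2 <| (k.opNorm_comp_le _).trans <|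
      mul_le_one₀ (mem_closedBall_zero_iff.1 hk) (norm_nonneg _) (Submodule.norm_subtypeL_le Y)
  have hne : M.Nonempty := by
    obtain ⟨k, hk, hkn⟩ := exists_extension_norm_eq Y g
    exact ⟨k, mem_closedBall_zero_iff.2 (hkn ▸ norm_le_one_of_mem_extBdual hg), by simpa using hk⟩
  have hcl : IsClosed (WeakDual.toStrongDual ⁻¹' M : Set (WeakDual ℝ V)) := by
    simp only [M, preimage_inter, preimage_iInter]
    exact (WeakDual.isClosed_closedBall 0 1).inter
      (isClosed_iInter fun y => isClosed_eq (WeakDual.eval_continuous (y : V)) continuous_const)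
  have hext : IsExtreme ℝ (closedBall 0 1) M := by
    refine ⟨inter_subset_left, ?_⟩
    rintro k₁ hk₁ k₂ hk₂ k ⟨-, hk⟩ ⟨a, b, ha, hb, hab, rfl⟩
    have hseg : g ∈ openSegment ℝ (k₁.comp Y.subtypeL) (k₂.comp Y.subtypeL) :=
      ⟨a, b, ha, hb, hab, by ext y; simpa using mem_iInter.1 hk y⟩
    have h₁ := ((mem_extremePoints.1 hg).2 _ (hres k₁ hk₁) _ (hres k₂ hk₂) hseg).1
    exact ⟨hk₁, mem_iInter.2 fun y => congr($h₁ y)⟩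
  obtain ⟨e, he, heM⟩ := extBdual_inter_nonempty_of_isExtreme hne hcl hext
  exact ⟨e, he, by simpa [M] using heM.2⟩

lemma norm_le_one_iff_forall_extBdual {y : V} : ‖y‖ ≤ 1 ↔ ∀ g ∈ extBdual V, g y ≤ 1 := by
  refine ⟨fun hy g hg => (apply_le_norm_of_norm_le_one (norm_le_one_of_mem_extBdual hg) y).trans hy,
    fun h => ?_⟩
  obtain ⟨e, he, hey⟩ := exists_mem_extBdual_apply_eq_norm y
  exact hey ▸ h e he

lemma exists_ne_zero_mem_normingSet [FiniteDimensional ℝ V] {κ : StrongDual ℝ V} (hκ : ‖κ‖ = 1) :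
    ∃ v ≠ 0, κ ∈ normingSet v := by
  have : Nontrivial (StrongDual ℝ V) := nontrivial_of_ne κ 0 (by rintro rfl; simp at hκ)
  obtain ⟨Φ, hΦ, hΦκ⟩ := exists_dual_vector' ℝ κ
  obtain ⟨v, rfl⟩ := NormedSpace.inclusionInDoubleDual_surjective Φ
  have hv : ‖v‖ = 1 := by
    rw [← hΦ]
    exact ((NormedSpace.inclusionInDoubleDualLi ℝ).norm_map v).symm
  refine ⟨v, by rintro rfl; simp at hv, mem_normingSet.2 ⟨hκ.le, ?_⟩⟩
  simpa [hv, hκ] using hΦκ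

/-- Property (BD) in homogeneous form: an extreme functional that nearly norms `v` norms it. -/
def PropertyBD (V : Type*) [NormedAddCommGroup V] [NormedSpace ℝ V] : Prop :=
  ∀ v : V, v ≠ 0 → ∃ θ < ‖v‖, ∀ g ∈ extBdual V, θ < g v → g v = ‖v‖

lemma propertyBD_of_bd {X : Type*} [NormedAddCommGroup X] [NormedSpace ℝ X]
    (hbd : ∀ x : X, ‖x‖ = 1 →
      sSup ((fun f : StrongDual ℝ X => f x) '' (extBdual X \ Dface x)) < 1)
    (Y : Subspace ℝ X) : PropertyBD Y := by
  intro v hv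
  have hv0 : 0 < ‖v‖ := norm_pos_iff.2 hv
  set x : X := ‖v‖⁻¹ • (v : X)
  have hx : ‖x‖ = 1 := by
    rw [norm_smul, norm_inv, norm_norm]
    exact inv_mul_cancel₀ hv0.ne'
  set s := sSup ((fun f : StrongDual ℝ X => f x) '' (extBdual X \ Dface x))
  refine ⟨s * ‖v‖, by nlinarith [hbd x hx], fun g hg hgv => ?_⟩
  obtain ⟨e, he, heg⟩ := exists_extension_mem_extBdual Y hg
  have hex : e x = ‖v‖⁻¹ * g v := by simp [x, heg]
  by_contra hne
  have hbdd : BddAbove ((fun f : StrongDual ℝ X => f x) '' (extBdual X \ Dface x)) := by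
    refine ⟨1, ?_⟩
    rintro _ ⟨f, hf, rfl⟩
    exact hx ▸ apply_le_norm_of_norm_le_one (norm_le_one_of_mem_extBdual hf.1) x
  have hnD : e ∉ Dface x := fun hD => hne ((inv_mul_eq_one₀ hv0.ne').1 (hex ▸ hD.2)).symm
  have hs : e x ≤ s := le_csSup hbdd ⟨e, ⟨he, hnD⟩, rfl⟩
  rw [hex] at hs
  have := (inv_mul_le_iff₀ hv0).1 hs
  linarith

namespace PropertyBD

lemma exists_norm_add_smul_eq (hV : PropertyBD V) {v z : V} {κ : StrongDual ℝ V}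
    (hv : v ≠ 0) (hκ : κ ∈ normingSet v) (hmax : ∀ γ ∈ normingSet v, γ z ≤ κ z) :
    ∃ t > 0, ‖v + t • z‖ = ‖v‖ + t * κ z := by
  -- for small `t`, the gap `‖v‖ - θ` keeps extreme functionals off `normingSet v` from norming
  -- `v + t • z`, and on `normingSet v` the largest value at `z` is `κ z`
  obtain ⟨θ, hθ, hgap⟩ := hV v hv
  rw [mem_normingSet] at hκ
  set t := (‖v‖ - θ) / (2 * ‖z‖ + 1)
  have ht : 0 < t := div_pos (by linarith) (by positivity)
  have htz : 2 * (t * ‖z‖) ≤ ‖v‖ - θ := by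
    have : t * (2 * ‖z‖ + 1) = ‖v‖ - θ := div_mul_cancel₀ _ (by positivity)
    nlinarith
  have hκz : -‖z‖ ≤ κ z :=
    neg_le.2 (by simpa using apply_le_norm_of_norm_le_one hκ.1 (-z))
  refine ⟨t, ht, le_antisymm ?_ ?_⟩
  · obtain ⟨e, he, hew⟩ := exists_mem_extBdual_apply_eq_norm (v + t • z)
    have he1 := norm_le_one_of_mem_extBdual he
    rw [← hew, map_add, map_smul, smul_eq_mul]
    by_cases hev : e v = ‖v‖
    · have := hmax e (mem_normingSet.2 ⟨he1, hev⟩)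
      nlinarith
    · have hev' : e v ≤ θ := not_lt.1 (mt (hgap e he) hev)
      have := apply_le_norm_of_norm_le_one he1 z
      nlinarith
  · calc ‖v‖ + t * κ z = κ (v + t • z) := by rw [map_add, map_smul, hκ.2, smul_eq_mul]
      _ ≤ ‖v + t • z‖ := apply_le_norm_of_norm_le_one hκ.1 _

lemma exists_normingSet_eq_inter (hV : PropertyBD V) {v z : V} {κ : StrongDual ℝ V}
    (hv : v ≠ 0) (hκ : κ ∈ normingSet v) (hmax : ∀ γ ∈ normingSet v, γ z ≤ κ z) :
    ∃ u ≠ 0, normingSet u = normingSet v ∩ {γ | γ z = κ z} := by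
  obtain ⟨t, ht, hw⟩ := hV.exists_norm_add_smul_eq hv hκ hmax
  have hκv := mem_normingSet.1 hκ
  have hvw : ‖v + (v + t • z)‖ = ‖v‖ + ‖v + t • z‖ := by
    refine le_antisymm (norm_add_le _ _) ?_
    calc ‖v‖ + ‖v + t • z‖ = κ (v + (v + t • z)) := by
          rw [hw, map_add, map_add, map_smul, hκv.2, smul_eq_mul]
      _ ≤ ‖v + (v + t • z)‖ := apply_le_norm_of_norm_le_one hκv.1 _
  refine ⟨v + (v + t • z), ?_, ?_⟩
  · rw [← norm_pos_iff, hvw]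
    have := norm_pos_iff.2 hv
    positivity
  · rw [normingSet_add hvw]
    ext γ
    simp only [mem_inter_iff, mem_ofPred_eq, mem_normingSet, hw, map_add, map_smul, smul_eq_mul]
    constructor
    · rintro ⟨⟨hγ, hγv⟩, -, hγw⟩
      rw [hγv, add_right_inj] at hγw
      exact ⟨⟨hγ, hγv⟩, mul_left_cancel₀ ht.ne' hγw⟩
    · rintro ⟨⟨hγ, hγv⟩, hγz⟩
      exact ⟨⟨hγ, hγv⟩, hγ, by rw [hγv, hγz]⟩

section FiniteDimensional

variable [FiniteDimensional ℝ V]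

lemma exists_finrank_vectorSpan_lt (hV : PropertyBD V) {κ : StrongDual ℝ V}
    (hacc : AccPt κ (𝓟 (extBdual V))) {v : V} (hv : v ≠ 0) (hκ : κ ∈ normingSet v) :
    ∃ u ≠ 0, κ ∈ normingSet u ∧
      Module.finrank ℝ (vectorSpan ℝ (normingSet u)) <
        Module.finrank ℝ (vectorSpan ℝ (normingSet v)) := by
  obtain ⟨θ, hθ, hgap⟩ := hV v hv
  have hnhds : {γ : StrongDual ℝ V | θ < γ v} ∈ 𝓝 κ :=
    (isOpen_lt continuous_const (NormedSpace.inclusionInDoubleDual ℝ V v).continuous).mem_nhds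
      (by simpa [(mem_normingSet.1 hκ).2] using hθ)
  -- by (BD), extreme functionals near `κ` lie in the face `normingSet v`
  have hacc' : AccPt κ (𝓟 (extremePoints ℝ (normingSet v))) := by
    refine (hacc.nhds_inter hnhds).mono (principal_mono.2 ?_)
    rintro g ⟨hgv, hg⟩
    refine inter_extremePoints_subset_extremePoints_of_subset inter_subset_left ⟨?_, hg⟩
    exact mem_normingSet.2 ⟨norm_le_one_of_mem_extBdual hg, hgap g hg hgv⟩
  obtain ⟨F, hFmax, γ', hγ', hlt⟩ :=
    (convex_normingSet v).exists_le_of_accPt_extremePoints hκ hacc'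
  obtain ⟨z, rfl⟩ := NormedSpace.inclusionInDoubleDual_surjective F
  simp only [NormedSpace.dual_def] at hFmax hlt
  obtain ⟨u, hu, hface⟩ := hV.exists_normingSet_eq_inter hv hκ hFmax
  refine ⟨u, hu, hface ▸ ⟨hκ, rfl⟩, ?_⟩
  refine finrank_vectorSpan_lt_of_subset (NormedSpace.inclusionInDoubleDual ℝ V z).toLinearMap
    (hface ▸ inter_subset_left) (fun a ha b hb => ?_) hγ' hκ hlt.ne
  rw [hface] at ha hb
  exact ha.2.trans hb.2.symm

lemma finite_extBdual (hV : PropertyBD V) : (extBdual V).Finite := by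
  by_contra hinf
  have : Nontrivial (StrongDual ℝ V) := not_subsingleton_iff_nontrivial.1 fun _ => hinf (toFinite _)
  obtain ⟨κ, -, hacc⟩ := Set.Infinite.exists_accPt_of_subset_isCompact hinf
    (isCompact_closedBall 0 1) extremePoints_subset
  have hκ : ‖κ‖ = 1 := by
    have := (isClosed_sphere.closure_subset_iff.2 extremePoints_closedBall_subset_sphere)
      (mem_closure_iff_clusterPt.2 hacc.clusterPt)
    simpa using this
  obtain ⟨v, hv, hκv⟩ := exists_ne_zero_mem_normingSet hκ
  -- descent on the dimension of the faces `normingSet v` containing `κ`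
  suffices ∀ n, ∀ v ≠ 0, κ ∈ normingSet v → Module.finrank ℝ (vectorSpan ℝ (normingSet v)) ≠ n from
    this _ v hv hκv rfl
  intro n
  induction n using Nat.strong_induction_on with
  | _ n ih =>
    rintro v hv hκv rfl
    obtain ⟨u, hu, hκu, hlt⟩ := hV.exists_finrank_vectorSpan_lt hacc hv hκv
    exact ih _ hlt u hu hκu rfl

end FiniteDimensional

end PropertyBD

lemma eq_of_forall_extBdual_apply_eq_one (hfin : (extBdual V).Finite) {e e' : V}
    (he : e ∈ extremePoints ℝ (closedBall 0 1)) (h : ∀ g ∈ extBdual V, g e = 1 → g e' = 1) :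
    e = e' := by
  -- near `e`, along the line through `e'`, the saturated constraints stay saturated and the
  -- finitely many others stay slack, so `e` is the midpoint of a segment in the ball
  have hnear : ∀ᶠ t in 𝓝 (0 : ℝ), e + t • (e' - e) ∈ closedBall (0 : V) 1 := by
    have : ∀ᶠ t in 𝓝 (0 : ℝ), ∀ g ∈ extBdual V, g (e + t • (e' - e)) ≤ 1 := by
      rw [eventually_all_finite hfin]
      intro g hg
      by_cases hge : g e = 1
      · exact Eventually.of_forall fun t => by simp [hge, h g hg hge]
      · have hle := apply_le_norm_of_norm_le_one (norm_le_one_of_mem_extBdual hg) e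
        have hlt : g e < 1 :=
          lt_of_le_of_ne (hle.trans (mem_closedBall_zero_iff.1 (extremePoints_subset he))) hge
        have hcont : Continuous fun t : ℝ => g (e + t • (e' - e)) := by fun_prop
        exact (hcont.continuousAt.eventually_lt continuousAt_const (by simpa using hlt)).mono
          fun t ht => ht.le
    filter_upwards [this] with t ht
    exact mem_closedBall_zero_iff.2 (norm_le_one_iff_forall_extBdual.2 ht)
  have hnear' : ∀ᶠ t in 𝓝 (0 : ℝ), e + (-t) • (e' - e) ∈ closedBall (0 : V) 1 :=
    (continuous_neg.tendsto' 0 0 neg_zero).eventually hnear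
  obtain ⟨t, ⟨htp, htm⟩, ht0⟩ :=
    (((hnear.and hnear').filter_mono nhdsWithin_le_nhds).and self_mem_nhdsWithin).exists
      (f := 𝓝[≠] (0 : ℝ))
  have := ((mem_extremePoints.1 he).2 _ htp _ htm
    ⟨1 / 2, 1 / 2, by norm_num, by norm_num, by norm_num, by module⟩).1
  rw [add_eq_left, smul_eq_zero, sub_eq_zero] at this
  exact (this.resolve_left ht0).symm

lemma finite_extremePoints_closedBall (hfin : (extBdual V).Finite) :
    (extremePoints ℝ (closedBall (0 : V) 1)).Finite := by
  let active : V → Set (StrongDual ℝ V) := fun e => {g ∈ extBdual V | g e = 1}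
  refine Set.Finite.of_finite_image (f := active) (hfin.finite_subsets.subset ?_) ?_
  · rintro _ ⟨e, -, rfl⟩
    exact sep_subset _ _
  · intro e he e' _ hee'
    exact eq_of_forall_extBdual_apply_eq_one hfin he fun g hg hge =>
      (show g ∈ active e' from hee' ▸ ⟨hg, hge⟩).2

lemma exists_finite_closedBall_eq_convexHull [FiniteDimensional ℝ V] (hfin : (extBdual V).Finite) :
    ∃ F : Set V, F.Finite ∧ closedBall 0 1 = convexHull ℝ F := by
  have hF := finite_extremePoints_closedBall hfin
  refine ⟨_, hF, ?_⟩
  rw [← (hF.isClosed_convexHull ℝ).closure_eq,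
    closure_convexHull_extremePoints (isCompact_closedBall 0 1) (convex_closedBall 0 1)]

end Dual

theorem polyhedral_of_bd_general
    {X : Type} [NormedAddCommGroup X] [NormedSpace ℝ X]
    (hbd : ∀ x : X, ‖x‖ = 1 →
      sSup ((fun f : StrongDual ℝ X => f x) '' (extBdual X \ Dface x)) < 1) :
    IsPolyhedralSpace X := fun Y _ =>
  exists_finite_closedBall_eq_convexHull (propertyBD_of_bd hbd Y).finite_extBdual

/-- A real Banach space with property (BD) is polyhedral. -/
theorem polyhedral_of_bd
    {X : Type} [NormedAddCommGroup X] [NormedSpace ℝ X] [CompleteSpace X]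
    (hbd : ∀ x : X, ‖x‖ = 1 →
      sSup ((fun f : StrongDual ℝ X => f x) '' (extBdual X \ Dface x)) < 1) :
    IsPolyhedralSpace X :=
  polyhedral_of_bd_general hbd

end
end

section
/- Let X be a real Banach space satisfying property (GM): x*(x) < 1 whenever x ∈ S_X and x* is a w*-limit point of ext(B_{X*}) (i.e., x* lies in the weak* closure of ext(B_{X*}) \ {x*}). Then X satisfies property (BD): for each x ∈ S_X, sup{x*(x) : x* ∈ ext(B_{X*}) \ D(x)} < 1. -/
open Filter Topology Metric
open scoped ENNReal

noncomputable section

/-- The set of weak*-limit points of a set `A ⊆ X*`: the functionals lying in the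
weak* closure of `A` minus themselves. -/
def wstarLimitPoints {X : Type} [NormedAddCommGroup X] [NormedSpace ℝ X]
    (A : Set (StrongDual ℝ X)) : Set (StrongDual ℝ X) :=
  {f | StrongDual.toWeakDual f ∈
    closure (StrongDual.toWeakDual '' (A \ {f}))}

/-!
If the supremum in (BD) were `1`, weak* compactness of the dual ball would give a functional `f`
in the weak* closure of `ext(B_{X*}) \ D(x)` with `f x = 1`. Then `f ∈ D(x)`, so `f` is not in
that set, which makes it a weak* limit point of `ext(B_{X*})` attaining `1` at `x`, against (GM).
-/

theorem Continuous.exists_mem_closure_eq_sSup_image {α β : Type*} [TopologicalSpace α]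
    [ConditionallyCompleteLinearOrder β] [TopologicalSpace β] [OrderTopology β] {φ : α → β}
    (hφ : Continuous φ) {A : Set α} (hA : IsCompact (closure A)) (hne : A.Nonempty) :
    ∃ a ∈ closure A, φ a = sSup (φ '' A) := by
  have : Nonempty β := ⟨φ hne.some⟩
  have himage : IsCompact (φ '' closure A) := hA.image hφ
  have hsub : φ '' A ⊆ φ '' closure A := Set.image_mono subset_closure
  have hsup : sSup (φ '' A) ∈ closure (φ '' A) :=
    csSup_mem_closure (hne.image φ) (himage.bddAbove.mono hsub)
  exact himage.isClosed.closure_subset_iff.mpr hsub hsup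

namespace WeakDual

variable {𝕜 E : Type*} [NontriviallyNormedField 𝕜] [SeminormedAddCommGroup E] [NormedSpace 𝕜 E]
  {A : Set (WeakDual 𝕜 E)} {x' : StrongDual 𝕜 E} {r : ℝ}

theorem closure_subset_closedBall (h : A ⊆ toStrongDual ⁻¹' closedBall x' r) :
    closure A ⊆ toStrongDual ⁻¹' closedBall x' r :=
  closure_minimal h (isClosed_closedBall x' r)

theorem isCompact_closure_of_subset_closedBall [ProperSpace 𝕜]
    (h : A ⊆ toStrongDual ⁻¹' closedBall x' r) : IsCompact (closure A) :=
  (isCompact_closedBall x' r).of_isClosed_subset isClosed_closure (closure_subset_closedBall h)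

end WeakDual

section

variable {X : Type} [NormedAddCommGroup X] [NormedSpace ℝ X] {f : StrongDual ℝ X} {x : X}

theorem apply_le_one_of_norm_le_one (hf : ‖f‖ ≤ 1) (hx : ‖x‖ ≤ 1) : f x ≤ 1 :=
  calc f x ≤ ‖f x‖ := Real.le_norm_self _
    _ ≤ 1 * 1 := f.le_of_opNorm_le_of_le hf hx
    _ = 1 := one_mul 1

theorem mem_Dface_of_norm_le_one (hf : ‖f‖ ≤ 1) (hx : ‖x‖ ≤ 1) (hfx : f x = 1) :
    f ∈ Dface x := by
  refine ⟨le_antisymm hf ?_, hfx⟩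
  calc (1 : ℝ) = f x := hfx.symm
    _ ≤ ‖f x‖ := Real.le_norm_self _
    _ ≤ ‖f‖ * 1 := f.le_of_opNorm_le_of_le le_rfl hx
    _ = ‖f‖ := mul_one _

theorem extBdual_subset_closedBall : extBdual X ⊆ closedBall 0 1 :=
  extremePoints_subset

theorem mem_wstarLimitPoints_of_mem_closure_diff_Dface {A : Set (StrongDual ℝ X)}
    (hf : StrongDual.toWeakDual f ∈ closure (StrongDual.toWeakDual '' (A \ Dface x)))
    (hfx : f ∈ Dface x) : f ∈ wstarLimitPoints A :=
  closure_mono (Set.image_mono (Set.sdiff_subset_sdiff_right (Set.singleton_subset_iff.mpr hfx))) hf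

end

theorem bd_of_gm_general
    {X : Type} [NormedAddCommGroup X] [NormedSpace ℝ X]
    (hgm : ∀ x : X, ‖x‖ = 1 → ∀ f ∈ wstarLimitPoints (extBdual X), f x < 1) :
    ∀ x : X, ‖x‖ = 1 →
      sSup ((fun f : StrongDual ℝ X => f x) '' (extBdual X \ Dface x)) < 1 := by
  intro x hx
  rcases (extBdual X \ Dface x).eq_empty_or_nonempty with hB | hB
  · simp [hB]
  set A := StrongDual.toWeakDual '' (extBdual X \ Dface x)
  have hA : A ⊆ WeakDual.toStrongDual ⁻¹' closedBall 0 1 := by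
    rintro _ ⟨f, hf, rfl⟩
    exact extBdual_subset_closedBall hf.1
  obtain ⟨g, hgA, hgx⟩ := (WeakDual.eval_continuous x).exists_mem_closure_eq_sSup_image
    (WeakDual.isCompact_closure_of_subset_closedBall hA) (hB.image _)
  set f := WeakDual.toStrongDual g
  have hf : ‖f‖ ≤ 1 := by simpa using WeakDual.closure_subset_closedBall hA hgA
  have hsup : sSup ((fun f : StrongDual ℝ X => f x) '' (extBdual X \ Dface x)) = f x := by
    rw [show f x = g x from rfl, hgx, Set.image_image]
    rfl
  rw [hsup]
  refine (apply_le_one_of_norm_le_one (f := f) hf hx.le).lt_of_ne fun hfx => ?_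
  have hlim : f ∈ wstarLimitPoints (extBdual X) :=
    mem_wstarLimitPoints_of_mem_closure_diff_Dface hgA (mem_Dface_of_norm_le_one hf hx.le hfx)
  exact (hgm x hx f hlim).ne hfx

/-- Property (GM) implies property (BD) in any real Banach space. -/
theorem bd_of_gm
    {X : Type} [NormedAddCommGroup X] [NormedSpace ℝ X] [CompleteSpace X]
    (hgm : ∀ x : X, ‖x‖ = 1 → ∀ f ∈ wstarLimitPoints (extBdual X), f x < 1) :
    ∀ x : X, ‖x‖ = 1 →
      sSup ((fun f : StrongDual ℝ X => f x) '' (extBdual X \ Dface x)) < 1 :=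
  bd_of_gm_general hgm

end
end

section
/- Let X be a separable Lindenstrauss space that contains a contractively complemented isometric copy of c (a linear isometric embedding J : c → X together with a bounded linear projection P : X → X with range J(c) and ‖P‖ ≤ 1). Then there exists x in the unit sphere S_X such that sup{x*(x) : x* ∈ ext(B_{X*}) \ D(x)} = 1. -/
open Filter Topology Metric
open scoped ENNReal

noncomputable section

/-- A Lindenstrauss space: a real Banach space whose dual is isometrically
isomorphic to `L¹(μ)` for some measure `μ`. -/
def IsLindenstrauss (X : Type) [NormedAddCommGroup X] [NormedSpace ℝ X] : Prop :=
  ∃ (α : Type) (_ : MeasurableSpace α) (μ : MeasureTheory.Measure α),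
    Nonempty (StrongDual ℝ X ≃ₗᵢ[ℝ] MeasureTheory.Lp ℝ 1 μ)

/-- `X` contains a contractively complemented isometric copy of `c`: a linear isometric
embedding `J : c → X` together with a bounded linear projection `P : X → X` with
range `J(c)` and `‖P‖ ≤ 1`. -/
def ContractivelyComplementedCopyOfC (X : Type) [NormedAddCommGroup X]
    [NormedSpace ℝ X] : Prop :=
  ∃ (J : SpaceC →ₗᵢ[ℝ] X) (P : X →L[ℝ] X),
    (∀ y, P (P y) = P y) ∧ Set.range P = Set.range J ∧ ‖P‖ ≤ 1

/-!
Take `x = J u` with `u k = k / (k + 1)`. For each `n`, the vector `v = J (u + (2 / (n + 1)) eₙ)`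
has `‖v‖ = 1 + 1 / (n + 1)`, `‖x + v‖ ≤ 2` and `‖v - x‖ ≤ 2 / (n + 1)`. An extreme point `f` of
`B_{X*}` norming `v` exists by Krein–Milman applied to the weak-* compact face of the ball on which
evaluation at `v` is maximal, and those three norms force `f x = 1 - 1 / (n + 1)`. So `f ∉ D(x)`,
and these values of `f x` tend to `1`.
-/

theorem IsCompact.exists_mem_extremePoints_isMaxOn {E : Type*} [AddCommGroup E] [Module ℝ E]
    [TopologicalSpace E] [T2Space E] [IsTopologicalAddGroup E] [ContinuousSMul ℝ E]
    [LocallyConvexSpace ℝ E] {s : Set E} (hs : IsCompact s) (hne : s.Nonempty) (l : E →L[ℝ] ℝ) :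
    ∃ e ∈ s.extremePoints ℝ, IsMaxOn l s e := by
  have hexp : IsExposed ℝ s {x ∈ s | ∀ y ∈ s, l y ≤ l x} := fun _ => ⟨l, rfl⟩
  obtain ⟨x, hxs, hxmax⟩ := hs.exists_isMaxOn hne l.continuous.continuousOn
  obtain ⟨e, he⟩ := (hexp.isCompact hs).extremePoints_nonempty ⟨x, hxs, hxmax⟩
  exact ⟨e, hexp.isExtreme.extremePoints_subset_extremePoints he, he.1.2⟩

section Dual

variable {X : Type*} [NormedAddCommGroup X] [NormedSpace ℝ X]

theorem apply_le_norm_of_mem_extBdual {f : StrongDual ℝ X} (hf : f ∈ extBdual X) (y : X) :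
    f y ≤ ‖y‖ :=
  (le_abs_self _).trans <| (f.le_opNorm y).trans <|
    mul_le_of_le_one_left (norm_nonneg y) (mem_closedBall_zero_iff.mp hf.1)

theorem exists_mem_extBdual_apply_eq_norm_s9 (y : X) : ∃ f ∈ extBdual X, f y = ‖y‖ := by
  have : LocallyConvexSpace ℝ (WeakDual ℝ X) := WeakBilin.locallyConvexSpace
  let evalAt : WeakDual ℝ X →L[ℝ] ℝ :=
    { toFun := fun f => f y
      map_add' := fun _ _ => rfl
      map_smul' := fun _ _ => rfl
      cont := WeakBilin.eval_continuous _ y }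
  obtain ⟨g, hg, hgy⟩ := exists_dual_vector'' ℝ y
  have hgB : g ∈ closedBall (0 : StrongDual ℝ X) 1 := mem_closedBall_zero_iff.mpr hg
  have hcompact := WeakDual.isCompact_closedBall (𝕜 := ℝ) (0 : StrongDual ℝ X) 1
  obtain ⟨e, he, hmax⟩ := hcompact.exists_mem_extremePoints_isMaxOn ⟨g, hgB⟩ evalAt
  have hge : g y ≤ e y := hmax hgB
  rw [hgy] at hge
  exact ⟨e, he, le_antisymm (apply_le_norm_of_mem_extBdual he y) hge⟩

theorem exists_mem_extBdual_apply_eq_one_sub {x v : X} {ε : ℝ} (hv : ‖v‖ = 1 + ε)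
    (hxv : ‖x + v‖ ≤ 2) (hvx : ‖v - x‖ ≤ 2 * ε) : ∃ f ∈ extBdual X, f x = 1 - ε := by
  obtain ⟨f, hf, hfv⟩ := exists_mem_extBdual_apply_eq_norm_s9 v
  -- `f x = f (x + v) - ‖v‖ ≤ 1 - ε` and `f x = ‖v‖ - f (v - x) ≥ 1 - ε`
  have hsum := apply_le_norm_of_mem_extBdual hf (x + v)
  have hdiff := apply_le_norm_of_mem_extBdual hf (v - x)
  rw [map_add] at hsum
  rw [map_sub] at hdiff
  exact ⟨f, hf, by linarith⟩

theorem sSup_extBdual_diff_Dface_eq_one {x : X} (hx : ‖x‖ = 1) {ε : ℕ → ℝ}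
    (hε : ∀ n, 0 < ε n) (hε0 : Tendsto ε atTop (𝓝 0))
    (hv : ∀ n, ∃ v : X, ‖v‖ = 1 + ε n ∧ ‖x + v‖ ≤ 2 ∧ ‖v - x‖ ≤ 2 * ε n) :
    sSup ((fun f : StrongDual ℝ X => f x) '' (extBdual X \ Dface x)) = 1 := by
  set S := (fun f : StrongDual ℝ X => f x) '' (extBdual X \ Dface x)
  have hle : ∀ r ∈ S, r ≤ 1 := by
    rintro _ ⟨f, ⟨hf, -⟩, rfl⟩
    simpa [hx] using apply_le_norm_of_mem_extBdual hf x
  have hmem : ∀ n, 1 - ε n ∈ S := by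
    intro n
    obtain ⟨v, hv, hxv, hvx⟩ := hv n
    obtain ⟨f, hf, hfx⟩ := exists_mem_extBdual_apply_eq_one_sub hv hxv hvx
    refine ⟨f, ⟨hf, fun hD => ?_⟩, hfx⟩
    linarith [hD.2, hε n]
  have hlim : Tendsto (fun n => 1 - ε n) atTop (𝓝 1) := by
    simpa using tendsto_const_nhds.sub hε0
  exact le_antisymm (csSup_le ⟨_, hmem 0⟩ hle)
    (le_of_tendsto' hlim fun n => le_csSup ⟨1, hle⟩ (hmem n))

end Dual

theorem natCast_div_succ_le_one (k : ℕ) : (k : ℝ) / (k + 1) ≤ 1 :=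
  div_le_one_of_le₀ (by linarith) (by positivity)

theorem abs_natCast_div_succ_le_one (k : ℕ) : |(k : ℝ) / (k + 1)| ≤ 1 :=
  (abs_of_nonneg (by positivity)).trans_le (natCast_div_succ_le_one k)

namespace SpaceC

local notation "ℓ∞" => lp (fun _ : ℕ => ℝ) ∞

theorem norm_le_of_forall_abs_le {w : SpaceC} {C : ℝ} (hC : 0 ≤ C)
    (hw : ∀ k, |(w : ℓ∞) k| ≤ C) : ‖w‖ ≤ C :=
  lp.norm_le_of_forall_le hC hw

theorem abs_apply_le_norm (w : SpaceC) (k : ℕ) : |(w : ℓ∞) k| ≤ ‖w‖ :=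
  lp.norm_apply_le_norm ENNReal.top_ne_zero (w : ℓ∞) k

def ramp : SpaceC :=
  ⟨⟨fun k => (k : ℝ) / (k + 1), memℓp_infty ⟨1, by
    rintro _ ⟨k, rfl⟩
    exact abs_natCast_div_succ_le_one k⟩⟩, 1, tendsto_natCast_div_add_atTop 1⟩

def basis (n : ℕ) : SpaceC :=
  ⟨lp.single ∞ n 1, 0, tendsto_const_nhds.congr' <| by
    filter_upwards [eventually_gt_atTop n] with k hk
    simp [lp.single_apply, hk.ne']⟩

def bump (n : ℕ) : SpaceC := ramp + (2 / (n + 1) : ℝ) • basis n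

theorem ramp_apply (k : ℕ) : (ramp : ℓ∞) k = k / (k + 1) := rfl

theorem basis_apply (n k : ℕ) : (basis n : ℓ∞) k = if k = n then 1 else 0 := by
  simp [basis, lp.single_apply, Pi.single_apply]

theorem bump_apply (n k : ℕ) :
    (bump n : ℓ∞) k = k / (k + 1) + if k = n then (2 / (n + 1) : ℝ) else 0 := by
  rw [bump, Submodule.coe_add, Submodule.coe_smul, lp.coeFn_add, lp.coeFn_smul, Pi.add_apply,
    Pi.smul_apply, ramp_apply, basis_apply, smul_eq_mul, mul_ite, mul_one, mul_zero]

theorem norm_basis (n : ℕ) : ‖basis n‖ = 1 := by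
  simp [basis]

theorem norm_ramp : ‖ramp‖ = 1 :=
  le_antisymm (norm_le_of_forall_abs_le zero_le_one abs_natCast_div_succ_le_one)
    (le_of_tendsto' (tendsto_natCast_div_add_atTop 1) fun k =>
      (le_abs_self _).trans (abs_apply_le_norm ramp k))

theorem norm_bump (n : ℕ) : ‖bump n‖ = 1 + 1 / (n + 1) := by
  have hpeak : (n : ℝ) / (n + 1) + 2 / (n + 1) = 1 + 1 / (n + 1) := by field_simp; ring
  refine le_antisymm (norm_le_of_forall_abs_le (by positivity) fun k => ?_) ?_
  · rw [bump_apply]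
    split_ifs with hkn
    · rw [hkn, hpeak, abs_of_pos (by positivity)]
    · rw [add_zero]
      linarith [abs_natCast_div_succ_le_one k, show (0 : ℝ) < 1 / (n + 1) by positivity]
  · have hn := abs_apply_le_norm (bump n) n
    rwa [bump_apply, if_pos rfl, hpeak, abs_of_pos (by positivity)] at hn

theorem norm_ramp_add_bump_le (n : ℕ) : ‖ramp + bump n‖ ≤ 2 := by
  refine norm_le_of_forall_abs_le zero_le_two fun k => ?_
  rw [Submodule.coe_add, lp.coeFn_add, Pi.add_apply, ramp_apply, bump_apply]
  split_ifs with hkn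
  · have hpeak : (n : ℝ) / (n + 1) + (n / (n + 1) + 2 / (n + 1)) = 2 := by field_simp; ring
    rw [hkn, hpeak, abs_two]
  · rw [add_zero, abs_of_nonneg (by positivity)]
    linarith [natCast_div_succ_le_one k]

theorem norm_bump_sub_ramp (n : ℕ) : ‖bump n - ramp‖ = 2 * (1 / (n + 1)) := by
  rw [bump, add_sub_cancel_left, norm_smul, norm_basis, mul_one,
    Real.norm_of_nonneg (by positivity)]
  ring

end SpaceC

theorem separable_lindenstrauss_sup_eq_one_of_ccc_general
    {X : Type} [NormedAddCommGroup X] [NormedSpace ℝ X]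
    (hccc : ContractivelyComplementedCopyOfC X) :
    ∃ x : X, ‖x‖ = 1 ∧
      sSup ((fun f : StrongDual ℝ X => f x) '' (extBdual X \ Dface x)) = 1 := by
  obtain ⟨J, -⟩ := hccc
  have hx : ‖J SpaceC.ramp‖ = 1 := by rw [J.norm_map, SpaceC.norm_ramp]
  refine ⟨J SpaceC.ramp, hx, sSup_extBdual_diff_Dface_eq_one hx (fun n => by positivity)
    tendsto_one_div_add_atTop_nhds_zero_nat fun n => ⟨J (SpaceC.bump n), ?_, ?_, ?_⟩⟩
  · rw [J.norm_map, SpaceC.norm_bump]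
  · rw [← map_add, J.norm_map]
    exact SpaceC.norm_ramp_add_bump_le n
  · rw [← map_sub, J.norm_map, SpaceC.norm_bump_sub_ramp]

/-- If a separable Lindenstrauss space contains a contractively complemented isometric
copy of `c`, then there is a point `x ∈ S_X` with
`sup{x*(x) : x* ∈ ext(B_{X*}) \ D(x)} = 1`. -/
theorem separable_lindenstrauss_sup_eq_one_of_ccc
    {X : Type} [NormedAddCommGroup X] [NormedSpace ℝ X] [CompleteSpace X]
    [TopologicalSpace.SeparableSpace X] (hL : IsLindenstrauss X)
    (hccc : ContractivelyComplementedCopyOfC X) :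
    ∃ x : X, ‖x‖ = 1 ∧
      sSup ((fun f : StrongDual ℝ X => f x) '' (extBdual X \ Dface x)) = 1 :=
  separable_lindenstrauss_sup_eq_one_of_ccc_general hccc

end
end

section
/- Let X be a real Banach space whose dual X* is isometrically isomorphic to ℓ₁, and let x ∈ S_X. Then the set ext(D(x)) of extreme points of the weak*-compact face D(x) is nonempty and at most countable, and every element of D(x) can be written as Σ_{i∈Δ} δ_i d_i* where {d_i*}_{i∈Δ} enumerates ext(D(x)), δ_i ≥ 0 for all i, Σ_{i∈Δ} δ_i = 1, and the series converges in norm in X*. -/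
open Filter Topology Metric
open scoped ENNReal

noncomputable section

/-!
Transport everything along `X* ≅ ℓ¹`. Then `D(x)` becomes the face of the unit ball of `ℓ¹` on
which the functional `φ = ⟨·, x⟩`, of norm at most `1`, equals `1`. With `cᵢ = φ(eᵢ)`, so that
`|cᵢ| ≤ 1`, a point `u` of this face satisfies `1 = ∑ uᵢ cᵢ ≤ ∑ |uᵢ| ≤ 1`; hence `u` is supported
on `J = {i | |cᵢ| = 1}`, with `uᵢ = |uᵢ| cᵢ`, i.e. `u = ∑ |uᵢ| (cᵢ eᵢ)`. The extreme points of the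
face are exactly the vectors `cᵢ eᵢ` with `i ∈ J`: there are countably many of them, the expansion
above is the required convex series, and Hahn–Banach makes `D(x)`, hence `J`, nonempty.
-/

def normingFace {E : Type*} [NormedAddCommGroup E] [NormedSpace ℝ E] (φ : StrongDual ℝ E) :
    Set E :=
  {u | ‖u‖ ≤ 1 ∧ φ u = 1}

local notation "ℓ¹[" ι "]" => lp (fun _ : ι => ℝ) 1

namespace EllOneFace

variable {ι : Type*}

theorem hasSum_abs (u : ℓ¹[ι]) : HasSum (fun i => |u i|) ‖u‖ := by
  simpa using lp.hasSum_norm (p := 1) (by norm_num) u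

theorem exists_apply_ne_zero_of_mem_normingFace {φ : StrongDual ℝ ℓ¹[ι]}
    {u : ℓ¹[ι]} (hu : u ∈ normingFace φ) : ∃ i, u i ≠ 0 := by
  by_contra! h
  have hu_zero : u = 0 := lp.ext (funext h)
  simpa [hu_zero] using hu.2

variable [DecidableEq ι] (φ : StrongDual ℝ ℓ¹[ι])

def coeff (i : ι) : ℝ := φ (lp.single 1 i 1)

def vertex (i : ι) : ℓ¹[ι] := lp.single 1 i (coeff φ i)

def vertexIndices : Set ι := {i | |coeff φ i| = 1}

variable {φ}

theorem apply_single (i : ι) (c : ℝ) : φ (lp.single 1 i c) = c * coeff φ i := by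
  rw [coeff, ← smul_eq_mul, ← map_smul, ← lp.single_smul, smul_eq_mul, mul_one]

theorem hasSum_mul_coeff (u : ℓ¹[ι]) : HasSum (fun i => u i * coeff φ i) (φ u) := by
  simpa only [apply_single] using φ.hasSum (lp.hasSum_single (by norm_num) u)

theorem abs_coeff_le (hφ : ‖φ‖ ≤ 1) (i : ι) : |coeff φ i| ≤ 1 := by
  simpa [coeff, lp.norm_single] using φ.le_of_opNorm_le hφ (lp.single 1 i (1 : ℝ))

theorem norm_sub_single_self (u : ℓ¹[ι]) (i : ι) :
    ‖u - lp.single 1 i (u i)‖ = ‖u‖ - |u i| := by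
  simpa using lp.norm_compl_sum_single (p := 1) (by norm_num) u {i}

theorem mem_normingFace_iff (hφ : ‖φ‖ ≤ 1) {u : ℓ¹[ι]} :
    u ∈ normingFace φ ↔ ‖u‖ = 1 ∧ ∀ i, u i * coeff φ i = |u i| := by
  have hle : ∀ i, u i * coeff φ i ≤ |u i| := fun i =>
    calc u i * coeff φ i ≤ |u i| * |coeff φ i| := by rw [← abs_mul]; exact le_abs_self _
      _ ≤ |u i| := mul_le_of_le_one_right (abs_nonneg _) (abs_coeff_le hφ i)
  constructor
  · rintro ⟨hnorm, hφu⟩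
    have hgap : HasSum (fun i => |u i| - u i * coeff φ i) (‖u‖ - 1) :=
      hφu ▸ (hasSum_abs u).sub (hasSum_mul_coeff u)
    have hgap_nonneg : ∀ i, 0 ≤ |u i| - u i * coeff φ i := fun i => sub_nonneg.2 (hle i)
    have hnorm_eq : ‖u‖ = 1 := le_antisymm hnorm (by linarith [hgap.nonneg hgap_nonneg])
    rw [hnorm_eq, sub_self, hasSum_zero_iff_of_nonneg hgap_nonneg] at hgap
    exact ⟨hnorm_eq, fun i => (sub_eq_zero.1 (congrFun hgap i)).symm⟩
  · rintro ⟨hnorm, hcoord⟩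
    refine ⟨hnorm.le, (hasSum_mul_coeff u).unique ?_⟩
    simpa only [hcoord, hnorm] using hasSum_abs u

theorem mem_vertexIndices (hφ : ‖φ‖ ≤ 1) {u : ℓ¹[ι]} (hu : u ∈ normingFace φ) {i : ι}
    (hi : u i ≠ 0) : i ∈ vertexIndices φ := by
  have := congrArg abs (((mem_normingFace_iff hφ).1 hu).2 i)
  rw [abs_mul, abs_abs] at this
  exact (mul_eq_left₀ (abs_ne_zero.2 hi)).1 this

theorem abs_mul_coeff (hφ : ‖φ‖ ≤ 1) {u : ℓ¹[ι]} (hu : u ∈ normingFace φ) (i : ι) :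
    |u i| * coeff φ i = u i := by
  rcases eq_or_ne (u i) 0 with hzero | hne
  · simp [hzero]
  have habs : |coeff φ i| = 1 := mem_vertexIndices hφ hu hne
  calc |u i| * coeff φ i = u i * |coeff φ i| ^ 2 := by
        rw [← ((mem_normingFace_iff hφ).1 hu).2 i, sq_abs]; ring
    _ = u i := by rw [habs, one_pow, mul_one]

theorem single_eq_smul_vertex (hφ : ‖φ‖ ≤ 1) {u : ℓ¹[ι]} (hu : u ∈ normingFace φ) (i : ι) :
    lp.single 1 i (u i) = |u i| • vertex φ i := by
  rw [vertex, ← lp.single_smul, smul_eq_mul, abs_mul_coeff hφ hu]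

theorem hasSum_smul_vertex (hφ : ‖φ‖ ≤ 1) {u : ℓ¹[ι]} (hu : u ∈ normingFace φ) :
    HasSum (fun i => |u i| • vertex φ i) u := by
  simpa only [single_eq_smul_vertex hφ hu] using lp.hasSum_single (p := 1) (by norm_num) u

theorem vertex_mem_normingFace {i : ι} (hi : i ∈ vertexIndices φ) :
    vertex φ i ∈ normingFace φ := by
  refine ⟨by rw [vertex, lp.norm_single (by norm_num), Real.norm_eq_abs, hi], ?_⟩
  rw [vertex, apply_single, ← sq, ← sq_abs, hi, one_pow]

theorem eq_vertex_of_abs_eq_one (hφ : ‖φ‖ ≤ 1) {u : ℓ¹[ι]} (hu : u ∈ normingFace φ) {i : ι}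
    (hi : |u i| = 1) : u = vertex φ i := by
  have := norm_sub_single_self u i
  rw [((mem_normingFace_iff hφ).1 hu).1, hi, sub_self, norm_eq_zero, sub_eq_zero,
    single_eq_smul_vertex hφ hu, hi, one_smul] at this
  exact this

theorem vertex_mem_extremePoints (hφ : ‖φ‖ ≤ 1) {i : ι} (hi : i ∈ vertexIndices φ) :
    vertex φ i ∈ Set.extremePoints ℝ (normingFace φ) := by
  refine ⟨vertex_mem_normingFace hi, fun y hy z hz ⟨a, b, ha, hb, hab, hyz⟩ => ?_⟩
  have hcoord : a * y i + b * z i = coeff φ i :=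
    calc a * y i + b * z i = (a • y + b • z : ℓ¹[ι]) i := rfl
      _ = coeff φ i := by rw [hyz, vertex, lp.single_apply_self]
  obtain ⟨hy_norm, hy_coord⟩ := (mem_normingFace_iff hφ).1 hy
  obtain ⟨hz_norm, hz_coord⟩ := (mem_normingFace_iff hφ).1 hz
  have hyi : |y i| ≤ 1 := hy_norm ▸ lp.norm_apply_le_norm one_ne_zero y i
  have hzi : |z i| ≤ 1 := hz_norm ▸ lp.norm_apply_le_norm one_ne_zero z i
  have hsum : a * |y i| + b * |z i| = 1 :=
    calc a * |y i| + b * |z i| = (a * y i + b * z i) * coeff φ i := by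
          rw [← hy_coord, ← hz_coord]; ring
      _ = 1 := by rw [hcoord, ← sq, ← sq_abs, hi, one_pow]
  exact eq_vertex_of_abs_eq_one hφ hy (by nlinarith)

/-- Splitting off the `i`-th coordinate writes `u` as a convex combination of `vertex φ i` and a
rescaled remainder that again lies on the face. -/
theorem exists_eq_vertex_of_mem_extremePoints (hφ : ‖φ‖ ≤ 1) {u : ℓ¹[ι]}
    (hu : u ∈ Set.extremePoints ℝ (normingFace φ)) :
    ∃ i ∈ vertexIndices φ, u = vertex φ i := by
  obtain ⟨hu_face, hu_ext⟩ := hu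
  obtain ⟨hu_norm, hu_coord⟩ := (mem_normingFace_iff hφ).1 hu_face
  obtain ⟨i, hi⟩ := exists_apply_ne_zero_of_mem_normingFace hu_face
  have hvi := mem_vertexIndices hφ hu_face hi
  refine ⟨i, hvi, ?_⟩
  set t := |u i|
  set r := u - lp.single 1 i (u i)
  have ht_le : t ≤ 1 := hu_norm ▸ lp.norm_apply_le_norm one_ne_zero u i
  rcases ht_le.eq_or_lt with ht | ht
  · exact eq_vertex_of_abs_eq_one hφ hu_face ht
  have hs : 0 < 1 - t := sub_pos.2 ht
  have hw : (1 - t)⁻¹ • r ∈ normingFace φ := by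
    refine ⟨?_, ?_⟩
    · rw [norm_smul, norm_sub_single_self, hu_norm, Real.norm_eq_abs, abs_inv, abs_of_pos hs,
        inv_mul_cancel₀ hs.ne']
    · rw [map_smul, map_sub, apply_single, hu_face.2, hu_coord, smul_eq_mul,
        inv_mul_cancel₀ hs.ne']
  refine (hu_ext (vertex_mem_normingFace hvi) hw ⟨t, 1 - t, abs_pos.2 hi, hs, by ring, ?_⟩).symm
  rw [smul_inv_smul₀ hs.ne', ← single_eq_smul_vertex hφ hu_face]
  exact add_sub_cancel _ _

theorem extremePoints_normingFace (hφ : ‖φ‖ ≤ 1) :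
    Set.extremePoints ℝ (normingFace φ) = vertex φ '' vertexIndices φ := by
  refine Set.Subset.antisymm (fun u hu => ?_)
    (Set.image_subset_iff.2 fun i hi => vertex_mem_extremePoints hφ hi)
  obtain ⟨i, hi, rfl⟩ := exists_eq_vertex_of_mem_extremePoints hφ hu
  exact ⟨i, hi, rfl⟩

theorem injOn_vertex : Set.InjOn (vertex φ) (vertexIndices φ) := by
  intro i hi j _ hij
  by_contra hne
  have : coeff φ i = 0 :=
    calc coeff φ i = vertex φ i i := (lp.single_apply_self (E := fun _ : ι => ℝ) 1 i _).symm
      _ = vertex φ j i := by rw [hij]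
      _ = 0 := lp.single_apply_ne (E := fun _ : ι => ℝ) 1 j _ hne
  simp [vertexIndices, this] at hi

theorem vertexIndices_nonempty (hφ : ‖φ‖ ≤ 1) (h : (normingFace φ).Nonempty) :
    (vertexIndices φ).Nonempty := by
  obtain ⟨u, hu⟩ := h
  obtain ⟨i, hi⟩ := exists_apply_ne_zero_of_mem_normingFace hu
  exact ⟨i, mem_vertexIndices hφ hu hi⟩

theorem support_abs_subset_vertexIndices (hφ : ‖φ‖ ≤ 1) {u : ℓ¹[ι]} (hu : u ∈ normingFace φ) :
    Function.support (fun i => |u i|) ⊆ vertexIndices φ :=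
  fun _ hi => mem_vertexIndices hφ hu (abs_ne_zero.1 hi)

end EllOneFace

section NormingFace

variable {E F : Type*} [NormedAddCommGroup E] [NormedSpace ℝ E]
  [NormedAddCommGroup F] [NormedSpace ℝ F]

theorem image_normingFace_comp (L : E ≃ₗᵢ[ℝ] F) (ψ : StrongDual ℝ F) :
    L '' normingFace (ψ.comp (L : E →L[ℝ] F)) = normingFace ψ := by
  ext f
  rw [L.image_eq_preimage_symm]
  simp [normingFace]

theorem Dface_eq_normingFace {x : E} (hx : ‖x‖ ≤ 1) :
    Dface x = normingFace (NormedSpace.inclusionInDoubleDual ℝ E x) := by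
  ext f
  refine and_congr_left fun hfx => ⟨le_of_eq, fun hf => hf.antisymm ?_⟩
  calc 1 = f x := hfx.symm
    _ ≤ ‖f‖ * ‖x‖ := (le_abs_self _).trans (f.le_opNorm x)
    _ ≤ ‖f‖ := mul_le_of_le_one_right (norm_nonneg f) hx

theorem Dface_nonempty {x : E} (hx : ‖x‖ = 1) : (Dface x).Nonempty := by
  obtain ⟨f, hf_norm, hfx⟩ := exists_dual_vector ℝ x (norm_ne_zero_iff.1 (by simp [hx]))
  exact ⟨f, hf_norm, by simpa [hx] using hfx⟩

end NormingFace

theorem exists_hasSum_smul_of_bijOn {ι E : Type*} [AddCommMonoid E] [TopologicalSpace E]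
    [Module ℝ E] {s : Set ι} {T : Set E} {g : ι → E} (hg : Set.BijOn g s T) {w : ι → ℝ}
    (hw : Function.support w ⊆ s) (hw_nonneg : ∀ i, 0 ≤ w i) (hw_sum : HasSum w 1) {f : E}
    (hf : HasSum (fun i => w i • g i) f) :
    ∃ δ : T → ℝ, (∀ p, 0 ≤ δ p) ∧ HasSum δ 1 ∧ HasSum (fun p : T => δ p • (p : E)) f := by
  set e := hg.equiv
  have hsupp : Function.support (fun i => w i • g i) ⊆ s :=
    (Function.support_smul_subset_left _ _).trans hw
  refine ⟨fun p => w (e.symm p), fun p => hw_nonneg _, ?_, ?_⟩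
  · exact (e.symm.hasSum_iff (f := fun j : s => w j)).2
      ((hasSum_subtype_iff_of_support_subset hw).2 hw_sum)
  · convert (e.symm.hasSum_iff (f := fun j : s => w j • g j)).2
      ((hasSum_subtype_iff_of_support_subset hsupp).2 hf) using 1
    refine funext fun p => congrArg (w (e.symm p) • ·) ?_
    exact congrArg Subtype.val (e.apply_symm_apply p).symm

open EllOneFace

theorem Dface_extremePoints_structure_general
    {X : Type} [NormedAddCommGroup X] [NormedSpace ℝ X]
    (hdual : Nonempty (StrongDual ℝ X ≃ₗᵢ[ℝ] EllOne))
    (x : X) (hx : ‖x‖ = 1) :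
    (Set.extremePoints ℝ (Dface x)).Nonempty ∧
    (Set.extremePoints ℝ (Dface x)).Countable ∧
    ∀ f ∈ Dface x, ∃ δ : (Set.extremePoints ℝ (Dface x)) → ℝ,
      (∀ i, 0 ≤ δ i) ∧ HasSum δ 1 ∧
      HasSum (fun i : (Set.extremePoints ℝ (Dface x)) =>
        δ i • (i : StrongDual ℝ X)) f := by
  obtain ⟨e⟩ := hdual
  set L := e.symm
  set φ := (NormedSpace.inclusionInDoubleDual ℝ X x).comp (L : EllOne →L[ℝ] StrongDual ℝ X)
  have hφ : ‖φ‖ ≤ 1 := by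
    rw [ContinuousLinearMap.opNorm_comp_linearIsometryEquiv]
    exact (NormedSpace.double_dual_bound ℝ X x).trans hx.le
  have hD : Dface x = L '' normingFace φ := by
    rw [image_normingFace_comp, Dface_eq_normingFace hx.le]
  have hext : Set.extremePoints ℝ (Dface x) = (L ∘ vertex φ) '' vertexIndices φ := by
    rw [hD, ← image_extremePoints, extremePoints_normingFace hφ, Set.image_comp]
  have hbij : Set.BijOn (L ∘ vertex φ) (vertexIndices φ) (Set.extremePoints ℝ (Dface x)) :=
    hext ▸ (L.injective.comp_injOn injOn_vertex).bijOn_image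
  refine ⟨?_, hext ▸ (Set.to_countable _).image _, fun f hf => ?_⟩
  · have hface : (normingFace φ).Nonempty := by
      simpa [hD] using Dface_nonempty hx
    exact hext ▸ (vertexIndices_nonempty hφ hface).image _
  · obtain ⟨u, hu, rfl⟩ := hD ▸ hf
    refine exists_hasSum_smul_of_bijOn hbij (support_abs_subset_vertexIndices hφ hu)
      (fun _ => abs_nonneg _) ?_ ?_
    · simpa [((mem_normingFace_iff hφ).1 hu).1] using hasSum_abs u
    · simpa using (L : EllOne →L[ℝ] StrongDual ℝ X).hasSum (hasSum_smul_vertex hφ hu)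

/-- For a predual `X` of `ℓ₁` and `x ∈ S_X`, the set of extreme points of the face
`D(x)` is nonempty and at most countable, and every element of `D(x)` is a norm-convergent
convex series `Σ δ_i d_i*` of these extreme points. -/
theorem Dface_extremePoints_structure
    {X : Type} [NormedAddCommGroup X] [NormedSpace ℝ X] [CompleteSpace X]
    (hdual : Nonempty (StrongDual ℝ X ≃ₗᵢ[ℝ] EllOne))
    (x : X) (hx : ‖x‖ = 1) :
    (Set.extremePoints ℝ (Dface x)).Nonempty ∧
    (Set.extremePoints ℝ (Dface x)).Countable ∧
    ∀ f ∈ Dface x, ∃ δ : (Set.extremePoints ℝ (Dface x)) → ℝ,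
      (∀ i, 0 ≤ δ i) ∧ HasSum δ 1 ∧
      HasSum (fun i : (Set.extremePoints ℝ (Dface x)) =>
        δ i • (i : StrongDual ℝ X)) f :=
  Dface_extremePoints_structure_general hdual x hx
end
end
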